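/- arXiv:2107.11630 — 7 statements merged into one kernel-verified Lean document; each statement's English description precedes it below -/
import Mathlib

section
/- Let X be a metric space, C a positive natural number, and ε ≥ 0. Let g : X → Option (Fin C) be a detector and let f : X → Fin C be a classifier satisfying the minimum-distance-decoding construction with respect to g at radius ε/2, namely: (a) for every x and y, if g x = some y then f x = y; and (b) for every x with g x = none, if there exists x' with dist x x' ≤ ε/2 and g x' ≠ none, then there exists x' with dist x x' ≤ ε/2 and g x' = some (f x). Then for every point x ∈ X and label y ∈ Fin C: if there exists x̂ with dist x x̂ ≤ ε/2 and f x̂ ≠ y (i.e., f fails to robustly classify (x, y) at distance ε/2), then either g x ≠ some y, or there exists x'' with dist x x'' ≤ ε, g x'' ≠ some y, and g x'' ≠ none (i.e., g fails to be robust with detection on (x, y) at distance ε). -/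
/-! If `g` accepts `x` but `f` gives a nearby `xhat` a label other than `y`, that label was
produced by `g` itself: at `xhat` if `g` accepts `xhat`, and otherwise, since the accepted point
`x` lies within `ε / 2` of `xhat`, at some point within `ε / 2` of `xhat` by the decoding rule.
Either way `g` accepts a point within `ε` of `x` with a wrong label. -/

section MinimumDistanceDecoding

variable {X α : Type*} [PseudoMetricSpace X] {r : ℝ} {g : X → Option α} {f : X → α}

theorem exists_dist_le_two_mul_and_eq_some_of_decoding (ha : ∀ x y, g x = some y → f x = y)
    (hb : ∀ x, g x = none → (∃ x', dist x x' ≤ r ∧ g x' ≠ none) →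
      ∃ x', dist x x' ≤ r ∧ g x' = some (f x))
    {x xhat : X} (hgx : g x ≠ none) (hd : dist x xhat ≤ r) :
    ∃ x', dist x x' ≤ 2 * r ∧ g x' = some (f xhat) := by
  cases hg : g xhat with
  | some z =>
    exact ⟨xhat, by linarith [dist_nonneg (x := x) (y := xhat)], by rw [hg, ha xhat z hg]⟩
  | none =>
    obtain ⟨x', hd', hx'⟩ := hb xhat hg ⟨x, by rwa [dist_comm], hgx⟩
    refine ⟨x', ?_, hx'⟩
    calc dist x x' ≤ dist x xhat + dist xhat x' := dist_triangle _ _ _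
      _ ≤ 2 * r := by linarith

end MinimumDistanceDecoding

theorem detector_failure_of_classifier_failure_general
    {X : Type*} [MetricSpace X] (C : ℕ) (ε : ℝ)
    (g : X → Option (Fin C)) (f : X → Fin C)
    (ha : ∀ x y, g x = some y → f x = y)
    (hb : ∀ x, g x = none →
      (∃ x', dist x x' ≤ ε / 2 ∧ g x' ≠ none) →
      ∃ x', dist x x' ≤ ε / 2 ∧ g x' = some (f x))
    (x : X) (y : Fin C)
    (hfail : ∃ xhat, dist x xhat ≤ ε / 2 ∧ f xhat ≠ y) :
    g x ≠ some y ∨ ∃ x'', dist x x'' ≤ ε ∧ g x'' ≠ some y ∧ g x'' ≠ none := by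
  obtain ⟨xhat, hd, hfy⟩ := hfail
  by_cases hgx : g x = some y
  · obtain ⟨x', hd', hx'⟩ :=
      exists_dist_le_two_mul_and_eq_some_of_decoding ha hb (by simp [hgx]) hd
    refine .inr ⟨x', by linarith, ?_, by simp [hx']⟩
    simpa [hx'] using hfy
  · exact .inl hgx

theorem detector_failure_of_classifier_failure
    {X : Type*} [MetricSpace X] (C : ℕ) (hC : 0 < C) (ε : ℝ) (hε : 0 ≤ ε)
    (g : X → Option (Fin C)) (f : X → Fin C)
    (ha : ∀ x y, g x = some y → f x = y)
    (hb : ∀ x, g x = none →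
      (∃ x', dist x x' ≤ ε / 2 ∧ g x' ≠ none) →
      ∃ x', dist x x' ≤ ε / 2 ∧ g x' = some (f x))
    (x : X) (y : Fin C)
    (hfail : ∃ xhat, dist x xhat ≤ ε / 2 ∧ f xhat ≠ y) :
    g x ≠ some y ∨ ∃ x'', dist x x'' ≤ ε ∧ g x'' ≠ some y ∧ g x'' ≠ none :=
  detector_failure_of_classifier_failure_general C ε g f ha hb x y hfail
end

section
/- Let X be a metric space, C a positive natural number, and ε ≥ 0. Let g : X → Option (Fin C) be a detector and let f : X → Fin C be a classifier satisfying the minimum-distance-decoding construction with respect to g at radius ε/2 (as in conditions (a) and (b)). For every point x ∈ X and label y ∈ Fin C: if g is robust with detection on (x, y) at distance ε — that is, g x = some y and every x'' with dist x x'' ≤ ε satisfies g x'' ∈ {some y, none} — then f robustly classifies (x, y) at distance ε/2, i.e., every x̂ with dist x x̂ ≤ ε/2 satisfies f x̂ = y. -/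
/-! A point `x̂` within `ε/2` of `x` that `g` accepts carries the label `y` by robustness of `g`.
If `g` rejects `x̂`, decoding picks an accepted `x'` within `ε/2` of `x̂`, hence within `ε` of `x`,
whose label is therefore `y` as well. -/

theorem robust_classification_of_robust_detection_general
    {X : Type*} [MetricSpace X] (C : ℕ) (ε : ℝ)
    (g : X → Option (Fin C)) (f : X → Fin C)
    (ha : ∀ x y, g x = some y → f x = y)
    (hb : ∀ x, g x = none →
      (∃ x', dist x x' ≤ ε / 2 ∧ g x' ≠ none) →
      ∃ x', dist x x' ≤ ε / 2 ∧ g x' = some (f x))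
    (x : X) (y : Fin C)
    (hgx : g x = some y)
    (hrob : ∀ x'', dist x x'' ≤ ε → g x'' = some y ∨ g x'' = none) :
    ∀ xhat, dist x xhat ≤ ε / 2 → f xhat = y := by
  intro xhat hd
  have accepted_eq : ∀ x', dist x x' ≤ ε → g x' ≠ none → g x' = some y :=
    fun x' hx' hg => (hrob x' hx').resolve_right hg
  cases hg : g xhat with
  | some z =>
    have hdε : dist x xhat ≤ ε := by linarith [dist_nonneg (x := x) (y := xhat)]
    exact ha xhat y (accepted_eq xhat hdε (by simp [hg]))
  | none =>
    obtain ⟨x', hx', hgx'⟩ := hb xhat hg ⟨x, by rwa [dist_comm], by simp [hgx]⟩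
    have hdε : dist x x' ≤ ε := by linarith [dist_triangle x xhat x']
    exact Option.some_injective _ (hgx' ▸ accepted_eq x' hdε (by simp [hgx']))

theorem robust_classification_of_robust_detection
    {X : Type*} [MetricSpace X] (C : ℕ) (hC : 0 < C) (ε : ℝ) (hε : 0 ≤ ε)
    (g : X → Option (Fin C)) (f : X → Fin C)
    (ha : ∀ x y, g x = some y → f x = y)
    (hb : ∀ x, g x = none →
      (∃ x', dist x x' ≤ ε / 2 ∧ g x' ≠ none) →
      ∃ x', dist x x' ≤ ε / 2 ∧ g x' = some (f x))
    (x : X) (y : Fin C)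
    (hgx : g x = some y)
    (hrob : ∀ x'', dist x x'' ≤ ε → g x'' = some y ∨ g x'' = none) :
    ∀ xhat, dist x xhat ≤ ε / 2 → f xhat = y :=
  robust_classification_of_robust_detection_general C ε g f ha hb x y hgx hrob
end

section
/- (Theorem 1, existence form.) Let X be a metric space, C a positive natural number, ε ≥ 0, and μ a measure on X × Fin C. For every detector g : X → Option (Fin C) there exists a classifier f : X → Fin C such that both: (i) μ {(x, y) | f x ≠ y} ≤ μ {(x, y) | g x ≠ some y}, and (ii) μ {(x, y) | ∃ x̂, dist x x̂ ≤ ε/2 ∧ f x̂ ≠ y} ≤ μ {(x, y) | g x ≠ some y ∨ ∃ x̂, dist x x̂ ≤ ε ∧ g x̂ ≠ some y ∧ g x̂ ≠ none}. That is, a detector achieving risk α and robust risk with detection β at distance ε yields a classifier achieving risk at most α and robust risk at most β at distance ε/2. -/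
/-!
Where the detector answers, the classifier copies it; where it rejects `x`, the classifier
copies the answer of the detector at some non-rejected point within `ε / 2` of `x`. If the
detector is correct at `x` and the classifier errs at some `x̂` within `ε / 2`, then that error
is an answer the detector itself gives at a non-rejected point within `ε / 2 + ε / 2 = ε` of `x`.
-/

open MeasureTheory

section

variable {X Y : Type*} [PseudoMetricSpace X]

noncomputable def nearbyLabel (g : X → Option Y) (r : ℝ) (y₀ : Y) (x : X) : Y :=
  open Classical in
  if h : ∃ y w, dist x w ≤ r ∧ g w = some y then h.choose else y₀

noncomputable def classifierOfDetector (g : X → Option Y) (r : ℝ) (y₀ : Y) (x : X) : Y :=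
  (g x).getD (nearbyLabel g r y₀ x)

theorem classifierOfDetector_of_eq_some {g : X → Option Y} {r : ℝ} {y₀ : Y} {x : X} {y : Y}
    (hx : g x = some y) : classifierOfDetector g r y₀ x = y := by
  simp [classifierOfDetector, hx]

theorem exists_dist_le_add_and_eq_some_classifierOfDetector {g : X → Option Y} {r : ℝ} {y₀ : Y}
    {x z : X} {y : Y} (hx : g x = some y) (hd : dist x z ≤ r) :
    ∃ w, dist x w ≤ r + r ∧ g w = some (classifierOfDetector g r y₀ z) := by
  cases hz : g z with
  | some c =>
    refine ⟨z, by linarith [dist_nonneg (x := x) (y := z)], ?_⟩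
    rw [hz, classifierOfDetector_of_eq_some hz]
  | none =>
    have hnear : ∃ y w, dist z w ≤ r ∧ g w = some y := ⟨y, x, by rwa [dist_comm], hx⟩
    obtain ⟨w, hdw, hw⟩ := hnear.choose_spec
    refine ⟨w, (dist_triangle x z w).trans (add_le_add hd hdw), ?_⟩
    simp [classifierOfDetector, nearbyLabel, hz, hnear, hw]

theorem setOf_classifierOfDetector_ne_subset (g : X → Option Y) (r : ℝ) (y₀ : Y) :
    {p : X × Y | classifierOfDetector g r y₀ p.1 ≠ p.2} ⊆ {p | g p.1 ≠ some p.2} :=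
  fun _ hp hg => hp (classifierOfDetector_of_eq_some hg)

theorem setOf_robust_classifierOfDetector_ne_subset (g : X → Option Y) (r : ℝ) (y₀ : Y) :
    {p : X × Y | ∃ z, dist p.1 z ≤ r ∧ classifierOfDetector g r y₀ z ≠ p.2} ⊆
      {p | g p.1 ≠ some p.2 ∨ ∃ z, dist p.1 z ≤ r + r ∧ g z ≠ some p.2 ∧ g z ≠ none} := by
  rintro ⟨x, y⟩ ⟨z, hd, hne⟩
  by_cases hx : g x = some y
  · obtain ⟨w, hdw, hw⟩ := exists_dist_le_add_and_eq_some_classifierOfDetector hx hd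
    exact Or.inr ⟨w, hdw, by simpa [hw] using hne, by simp [hw]⟩
  · exact Or.inl hx

end

theorem robust_detection_implies_robust_classification_general
    {X : Type*} [MetricSpace X] [MeasurableSpace X] (C : ℕ) (hC : 0 < C) (ε : ℝ)
    (μ : MeasureTheory.Measure (X × Fin C))
    (g : X → Option (Fin C)) :
    ∃ f : X → Fin C,
      μ {p : X × Fin C | f p.1 ≠ p.2} ≤ μ {p : X × Fin C | g p.1 ≠ some p.2} ∧
      μ {p : X × Fin C | ∃ xhat, dist p.1 xhat ≤ ε / 2 ∧ f xhat ≠ p.2} ≤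
        μ {p : X × Fin C | g p.1 ≠ some p.2 ∨
          ∃ xhat, dist p.1 xhat ≤ ε ∧ g xhat ≠ some p.2 ∧ g xhat ≠ none} := by
  refine ⟨classifierOfDetector g (ε / 2) ⟨0, hC⟩,
    measure_mono (setOf_classifierOfDetector_ne_subset _ _ _), ?_⟩
  have hrobust := setOf_robust_classifierOfDetector_ne_subset g (ε / 2) ⟨0, hC⟩
  rw [add_halves] at hrobust
  exact measure_mono hrobust

theorem robust_detection_implies_robust_classification
    {X : Type*} [MetricSpace X] [MeasurableSpace X] (C : ℕ) (hC : 0 < C) (ε : ℝ) (hε : 0 ≤ ε)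
    (μ : MeasureTheory.Measure (X × Fin C))
    (g : X → Option (Fin C)) :
    ∃ f : X → Fin C,
      μ {p : X × Fin C | f p.1 ≠ p.2} ≤ μ {p : X × Fin C | g p.1 ≠ some p.2} ∧
      μ {p : X × Fin C | ∃ xhat, dist p.1 xhat ≤ ε / 2 ∧ f xhat ≠ p.2} ≤
        μ {p : X × Fin C | g p.1 ≠ some p.2 ∨
          ∃ xhat, dist p.1 xhat ≤ ε ∧ g xhat ≠ some p.2 ∧ g xhat ≠ none} :=
  robust_detection_implies_robust_classification_general C hC ε μ g
end

section
/- Let E be a real normed vector space, C a positive natural number, and ε ≥ 0. Let f : E → Fin C be a classifier and define the detector g : E → Option (Fin C) by g x = none if there exists x' with dist x x' ≤ ε/2 and f x' ≠ f x, and g x = some (f x) otherwise. Then for every x ∈ E and y ∈ Fin C: if f robustly classifies (x, y) at distance ε/2 (every point within distance ε/2 of x is classified as y by f), then g is robust with detection on (x, y) at distance ε; that is, g x = some y and every x̂ with dist x x̂ ≤ ε satisfies g x̂ = some y or g x̂ = none. -/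
/-!
If `f` is constant equal to `y` on the ball of radius `ε/2` around `x`, then `x` itself is
accepted with label `y`. A point `x̂` with `dist x x̂ ≤ ε` that is accepted has `f` constant on
its own ball of radius `ε/2`; the midpoint of `x` and `x̂` lies in both balls, so that constant is
`y` as well.
-/

theorem exists_dist_le_half_of_dist_le {V P : Type*} [SeminormedAddCommGroup V]
    [NormedSpace ℝ V] [PseudoMetricSpace P] [NormedAddTorsor V P] {x z : P} {ε : ℝ}
    (h : dist x z ≤ ε) : ∃ m, dist x m ≤ ε / 2 ∧ dist z m ≤ ε / 2 := by
  have hx : dist x (midpoint ℝ x z) ≤ ε / 2 := by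
    rw [dist_left_midpoint, Real.norm_two]
    linarith
  exact ⟨midpoint ℝ x z, hx, dist_left_midpoint_eq_dist_right_midpoint (𝕜 := ℝ) x z ▸ hx⟩

theorem certified_detector_robust_with_detection_general
    {E : Type*} [NormedAddCommGroup E] [NormedSpace ℝ E]
    (C : ℕ) (ε : ℝ) (hε : 0 ≤ ε)
    (f : E → Fin C) (g : E → Option (Fin C))
    (hg_rej : ∀ x, (∃ x', dist x x' ≤ ε / 2 ∧ f x' ≠ f x) → g x = none)
    (hg_acc : ∀ x, ¬(∃ x', dist x x' ≤ ε / 2 ∧ f x' ≠ f x) → g x = some (f x))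
    (x : E) (y : Fin C)
    (hrob : ∀ xhat, dist x xhat ≤ ε / 2 → f xhat = y) :
    g x = some y ∧ ∀ xhat, dist x xhat ≤ ε → g xhat = some y ∨ g xhat = none := by
  have hfx : f x = y := hrob x (by rw [dist_self]; positivity)
  refine ⟨?_, fun xhat hd => ?_⟩
  · rw [hg_acc x, hfx]
    rintro ⟨x', hx', hne⟩
    exact hne ((hrob x' hx').trans hfx.symm)
  · by_cases hrej : ∃ x', dist xhat x' ≤ ε / 2 ∧ f x' ≠ f xhat
    · exact Or.inr (hg_rej xhat hrej)
    · left
      obtain ⟨m, hxm, hxhatm⟩ := exists_dist_le_half_of_dist_le hd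
      rw [hg_acc xhat hrej]
      push Not at hrej
      rw [← hrej m hxhatm, hrob m hxm]

theorem certified_detector_robust_with_detection
    {E : Type*} [NormedAddCommGroup E] [NormedSpace ℝ E]
    (C : ℕ) (hC : 0 < C) (ε : ℝ) (hε : 0 ≤ ε)
    (f : E → Fin C) (g : E → Option (Fin C))
    (hg_rej : ∀ x, (∃ x', dist x x' ≤ ε / 2 ∧ f x' ≠ f x) → g x = none)
    (hg_acc : ∀ x, ¬(∃ x', dist x x' ≤ ε / 2 ∧ f x' ≠ f x) → g x = some (f x))
    (x : E) (y : Fin C)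
    (hrob : ∀ xhat, dist x xhat ≤ ε / 2 → f xhat = y) :
    g x = some y ∧ ∀ xhat, dist x xhat ≤ ε → g xhat = some y ∨ g xhat = none :=
  certified_detector_robust_with_detection_general C ε hε f g hg_rej hg_acc x y hrob
end

section
/- (ε/2-robust classification implies ε-robust detection, measure version.) Let E be a real normed vector space, C a positive natural number, ε ≥ 0, and μ a measure on E × Fin C. Let f : E → Fin C be a classifier and define the detector g : E → Option (Fin C) by g x = none if there exists x' with dist x x' ≤ ε/2 and f x' ≠ f x, and g x = some (f x) otherwise. Then both: (i) the risk of g is at most the robust risk of f at distance ε/2, i.e. μ {(x, y) | g x ≠ some y} ≤ μ {(x, y) | ∃ x̂, dist x x̂ ≤ ε/2 ∧ f x̂ ≠ y}; and (ii) the robust risk with detection of g at distance ε is at most the robust risk of f at distance ε/2, i.e. μ {(x, y) | g x ≠ some y ∨ ∃ x̂, dist x x̂ ≤ ε ∧ g x̂ ≠ some y ∧ g x̂ ≠ none} ≤ μ {(x, y) | ∃ x̂, dist x x̂ ≤ ε/2 ∧ f x̂ ≠ y}. -/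
/-! A point the detector rejects or misclassifies already has an `ε/2`-perturbation that `f`
misclassifies: the point itself, or a witness of non-robustness. A point `x̂` the detector
accepts makes `f` constant on the closed `ε/2`-ball around it, so if `x̂` lies within `ε` of `x`,
the midpoint of `x` and `x̂` is an `ε/2`-perturbation of `x` carrying the wrong label `f x̂`. -/

open MeasureTheory

section Detector

variable {X Y : Type*} {f : X → Y} {g : X → Option Y}

theorem exists_dist_le_ne_of_ne_some [PseudoMetricSpace X] {δ : ℝ} (hδ : 0 ≤ δ)
    (hacc : ∀ x, ¬(∃ x', dist x x' ≤ δ ∧ f x' ≠ f x) → g x = some (f x))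
    {x : X} {y : Y} (hxy : g x ≠ some y) : ∃ z, dist x z ≤ δ ∧ f z ≠ y := by
  by_contra! hwrong
  have hfx : f x = y := hwrong x (by rwa [dist_self])
  refine hxy (hfx ▸ hacc x ?_)
  rintro ⟨x', hx', hne⟩
  exact hne (by rw [hwrong x' hx', hfx])

theorem dist_midpoint_le_half [SeminormedAddCommGroup X] [NormedSpace ℝ X] {ε : ℝ}
    {x x' : X} (h : dist x x' ≤ ε) :
    dist x (midpoint ℝ x x') ≤ ε / 2 ∧ dist x' (midpoint ℝ x x') ≤ ε / 2 := by
  rw [dist_left_midpoint, dist_right_midpoint, Real.norm_two]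
  constructor <;> linarith

theorem exists_dist_le_half_ne_of_accepted [SeminormedAddCommGroup X] [NormedSpace ℝ X] {ε : ℝ}
    (hrej : ∀ x, (∃ x', dist x x' ≤ ε / 2 ∧ f x' ≠ f x) → g x = none)
    (hacc : ∀ x, ¬(∃ x', dist x x' ≤ ε / 2 ∧ f x' ≠ f x) → g x = some (f x))
    {x xhat : X} {y : Y} (hdist : dist x xhat ≤ ε) (hwrong : g xhat ≠ some y)
    (haccepted : g xhat ≠ none) : ∃ z, dist x z ≤ ε / 2 ∧ f z ≠ y := by
  have hrobust : ¬∃ x', dist xhat x' ≤ ε / 2 ∧ f x' ≠ f xhat := fun h => haccepted (hrej xhat h)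
  have hfxhat : f xhat ≠ y := fun h => hwrong (h ▸ hacc xhat hrobust)
  obtain ⟨hleft, hright⟩ := dist_midpoint_le_half hdist
  refine ⟨midpoint ℝ x xhat, hleft, fun h => hrobust ⟨_, hright, ?_⟩⟩
  exact h ▸ hfxhat.symm

end Detector

theorem certified_detector_risk_bounds_general
    {E : Type*} [NormedAddCommGroup E] [NormedSpace ℝ E] [MeasurableSpace E]
    (C : ℕ) (ε : ℝ) (hε : 0 ≤ ε)
    (μ : MeasureTheory.Measure (E × Fin C))
    (f : E → Fin C) (g : E → Option (Fin C))
    (hg_rej : ∀ x, (∃ x', dist x x' ≤ ε / 2 ∧ f x' ≠ f x) → g x = none)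
    (hg_acc : ∀ x, ¬(∃ x', dist x x' ≤ ε / 2 ∧ f x' ≠ f x) → g x = some (f x)) :
    μ {p : E × Fin C | g p.1 ≠ some p.2} ≤
      μ {p : E × Fin C | ∃ xhat, dist p.1 xhat ≤ ε / 2 ∧ f xhat ≠ p.2} ∧
    μ {p : E × Fin C | g p.1 ≠ some p.2 ∨
        ∃ xhat, dist p.1 xhat ≤ ε ∧ g xhat ≠ some p.2 ∧ g xhat ≠ none} ≤
      μ {p : E × Fin C | ∃ xhat, dist p.1 xhat ≤ ε / 2 ∧ f xhat ≠ p.2} := by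
  have hhalf : 0 ≤ ε / 2 := by positivity
  refine ⟨measure_mono fun p hp => exists_dist_le_ne_of_ne_some hhalf hg_acc hp,
    measure_mono fun p hp => ?_⟩
  rcases hp with hp | ⟨xhat, hdist, hwrong, haccepted⟩
  · exact exists_dist_le_ne_of_ne_some hhalf hg_acc hp
  · exact exists_dist_le_half_ne_of_accepted hg_rej hg_acc hdist hwrong haccepted

theorem certified_detector_risk_bounds
    {E : Type*} [NormedAddCommGroup E] [NormedSpace ℝ E] [MeasurableSpace E]
    (C : ℕ) (hC : 0 < C) (ε : ℝ) (hε : 0 ≤ ε)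
    (μ : MeasureTheory.Measure (E × Fin C))
    (f : E → Fin C) (g : E → Option (Fin C))
    (hg_rej : ∀ x, (∃ x', dist x x' ≤ ε / 2 ∧ f x' ≠ f x) → g x = none)
    (hg_acc : ∀ x, ¬(∃ x', dist x x' ≤ ε / 2 ∧ f x' ≠ f x) → g x = some (f x)) :
    μ {p : E × Fin C | g p.1 ≠ some p.2} ≤
      μ {p : E × Fin C | ∃ xhat, dist p.1 xhat ≤ ε / 2 ∧ f xhat ≠ p.2} ∧
    μ {p : E × Fin C | g p.1 ≠ some p.2 ∨
        ∃ xhat, dist p.1 xhat ≤ ε ∧ g xhat ≠ some p.2 ∧ g xhat ≠ none} ≤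
      μ {p : E × Fin C | ∃ xhat, dist p.1 xhat ≤ ε / 2 ∧ f xhat ≠ p.2} :=
  certified_detector_risk_bounds_general C ε hε μ f g hg_rej hg_acc
end

section
/- (Theorem 2, existence form.) Let E be a real normed vector space, C a positive natural number, ε ≥ 0, and μ a measure on E × Fin C. For every classifier f : E → Fin C there exists a detector g : E → Option (Fin C) such that both its risk and its robust risk with detection at distance ε are bounded by the robust risk of f at distance ε/2: μ {(x, y) | g x ≠ some y} ≤ μ {(x, y) | ∃ x̂, dist x x̂ ≤ ε/2 ∧ f x̂ ≠ y}, and μ {(x, y) | g x ≠ some y ∨ ∃ x̂, dist x x̂ ≤ ε ∧ g x̂ ≠ some y ∧ g x̂ ≠ none} ≤ μ {(x, y) | ∃ x̂, dist x x̂ ≤ ε/2 ∧ f x̂ ≠ y}. -/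
/-!
Let `g` accept `x` with the label `f x` exactly when `f` is constant on the closed ball of
radius `ε/2` around `x`. If `g` errs at `(x, y)`, then either `f x ≠ y` or `f` changes value
within `ε/2` of `x`; either way `f` errs within `ε/2` of `x`. If `g` accepts some `x̂` with a
wrong label `f x̂ ≠ y` and `dist x x̂ ≤ ε`, then the midpoint of `x` and `x̂` is within `ε/2` of
both, so `f` takes the wrong value `f x̂` there. Hence both error events of `g` are contained in
the robust error event of `f` at radius `ε/2`.
-/

open MeasureTheory

section Detector

variable {X α : Type*} [PseudoMetricSpace X]

open Classical in
noncomputable def detectorOfClassifier (f : X → α) (r : ℝ) (x : X) : Option α :=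
  if ∀ z, dist x z ≤ r → f z = f x then some (f x) else none

theorem detectorOfClassifier_eq_some_of_forall {f : X → α} {r : ℝ} {x : X}
    (h : ∀ z, dist x z ≤ r → f z = f x) : detectorOfClassifier f r x = some (f x) := by
  classical
  exact if_pos h

theorem forall_dist_le_of_detectorOfClassifier_ne_none {f : X → α} {r : ℝ} {x : X}
    (h : detectorOfClassifier f r x ≠ none) : ∀ z, dist x z ≤ r → f z = f x := by
  classical
  by_contra hc
  exact h (if_neg hc)

theorem exists_dist_le_ne_of_detectorOfClassifier_ne_some {f : X → α} {r : ℝ} (hr : 0 ≤ r)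
    {x : X} {y : α} (h : detectorOfClassifier f r x ≠ some y) :
    ∃ z, dist x z ≤ r ∧ f z ≠ y := by
  have hx : dist x x ≤ r := by rwa [dist_self]
  by_cases hfx : f x = y
  · by_contra! hz
    exact h (hfx ▸ detectorOfClassifier_eq_some_of_forall fun z hz' => (hz z hz').trans hfx.symm)
  · exact ⟨x, hx, hfx⟩

end Detector

theorem exists_dist_le_dist_le_of_dist_le_two_mul {E : Type*} [SeminormedAddCommGroup E]
    [NormedSpace ℝ E] {x z : E} {r : ℝ} (h : dist x z ≤ 2 * r) :
    ∃ w, dist x w ≤ r ∧ dist z w ≤ r := by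
  refine ⟨midpoint ℝ x z, ?_, ?_⟩
  · rw [dist_left_midpoint (𝕜 := ℝ), Real.norm_two]
    linarith
  · rw [midpoint_comm, dist_left_midpoint (𝕜 := ℝ), Real.norm_two, dist_comm]
    linarith

theorem exists_dist_le_ne_of_detectorOfClassifier_accepts_wrong {E α : Type*}
    [SeminormedAddCommGroup E] [NormedSpace ℝ E] {f : E → α} {r : ℝ} {x xhat : E} {y : α}
    (hdist : dist x xhat ≤ 2 * r) (hwrong : detectorOfClassifier f r xhat ≠ some y)
    (haccept : detectorOfClassifier f r xhat ≠ none) :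
    ∃ w, dist x w ≤ r ∧ f w ≠ y := by
  have hconst := forall_dist_le_of_detectorOfClassifier_ne_none haccept
  have hfy : f xhat ≠ y := fun hfy =>
    hwrong (hfy ▸ detectorOfClassifier_eq_some_of_forall hconst)
  obtain ⟨w, hxw, hw⟩ := exists_dist_le_dist_le_of_dist_le_two_mul hdist
  exact ⟨w, hxw, hconst w hw ▸ hfy⟩

theorem robust_classification_implies_robust_detection_general
    {E : Type*} [NormedAddCommGroup E] [NormedSpace ℝ E] [MeasurableSpace E]
    (C : ℕ) (ε : ℝ) (hε : 0 ≤ ε)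
    (μ : MeasureTheory.Measure (E × Fin C))
    (f : E → Fin C) :
    ∃ g : E → Option (Fin C),
      μ {p : E × Fin C | g p.1 ≠ some p.2} ≤
        μ {p : E × Fin C | ∃ xhat, dist p.1 xhat ≤ ε / 2 ∧ f xhat ≠ p.2} ∧
      μ {p : E × Fin C | g p.1 ≠ some p.2 ∨
          ∃ xhat, dist p.1 xhat ≤ ε ∧ g xhat ≠ some p.2 ∧ g xhat ≠ none} ≤
        μ {p : E × Fin C | ∃ xhat, dist p.1 xhat ≤ ε / 2 ∧ f xhat ≠ p.2} := by
  have hr : 0 ≤ ε / 2 := by positivity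
  refine ⟨detectorOfClassifier f (ε / 2), measure_mono fun p hp =>
    exists_dist_le_ne_of_detectorOfClassifier_ne_some hr hp, measure_mono ?_⟩
  rintro ⟨x, y⟩ (hwrong | ⟨xhat, hdist, hwrong, haccept⟩)
  · exact exists_dist_le_ne_of_detectorOfClassifier_ne_some hr hwrong
  · exact exists_dist_le_ne_of_detectorOfClassifier_accepts_wrong
      (by linarith) hwrong haccept

theorem robust_classification_implies_robust_detection
    {E : Type*} [NormedAddCommGroup E] [NormedSpace ℝ E] [MeasurableSpace E]
    (C : ℕ) (hC : 0 < C) (ε : ℝ) (hε : 0 ≤ ε)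
    (μ : MeasureTheory.Measure (E × Fin C))
    (f : E → Fin C) :
    ∃ g : E → Option (Fin C),
      μ {p : E × Fin C | g p.1 ≠ some p.2} ≤
        μ {p : E × Fin C | ∃ xhat, dist p.1 xhat ≤ ε / 2 ∧ f xhat ≠ p.2} ∧
      μ {p : E × Fin C | g p.1 ≠ some p.2 ∨
          ∃ xhat, dist p.1 xhat ≤ ε ∧ g xhat ≠ some p.2 ∧ g xhat ≠ none} ≤
        μ {p : E × Fin C | ∃ xhat, dist p.1 xhat ≤ ε / 2 ∧ f xhat ≠ p.2} :=
  robust_classification_implies_robust_detection_general C ε hε μ f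
end

section
/- (Hardness transfer from classifiers to detectors.) Let X be a metric space, C a positive natural number, ε ≥ 0, μ a measure on X × Fin C, and α, β ∈ ℝ≥0∞. Suppose that every classifier f : X → Fin C with risk μ {(x, y) | f x ≠ y} ≤ α has robust risk at distance ε/2 at least β, i.e. μ {(x, y) | ∃ x̂, dist x x̂ ≤ ε/2 ∧ f x̂ ≠ y} ≥ β. Then every detector g : X → Option (Fin C) with risk μ {(x, y) | g x ≠ some y} ≤ α has robust risk with detection at distance ε at least β, i.e. μ {(x, y) | g x ≠ some y ∨ ∃ x̂, dist x x̂ ≤ ε ∧ g x̂ ≠ some y ∧ g x̂ ≠ none} ≥ β. -/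
/-!
A detector `g` is turned into a classifier that keeps the label of `g` wherever `g` accepts and,
at a rejected point, copies the label of some accepted point at distance at most `ε / 2` (any
label if there is none). The classifier errs only where `g` errs, so its risk is at most that of
`g`. If it is fooled within `ε / 2` of a point `x` that `g` classifies correctly, the fooling point
is either accepted by `g` with a wrong label, or rejected and then lies within `ε / 2` of an
accepted point carrying the wrong label; either way `g` is fooled within `ε` of `x`.
-/

open MeasureTheory

namespace Detector

variable {X Y : Type*} [PseudoMetricSpace X]

open Classical in
noncomputable def toClassifier (g : X → Option Y) (r : ℝ) (y₀ : Y) (x : X) : Y :=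
  (g x).getD <| if h : ∃ y x', dist x x' ≤ r ∧ g x' = some y then h.choose else y₀

variable {g : X → Option Y} {r : ℝ} {y₀ : Y}

theorem toClassifier_of_eq_some {x : X} {y : Y} (h : g x = some y) :
    toClassifier g r y₀ x = y := by
  simp [toClassifier, h]

theorem exists_near_eq_some_toClassifier {x x' : X} {y : Y} (hx : g x = none)
    (hx' : dist x x' ≤ r) (hy : g x' = some y) :
    ∃ x'', dist x x'' ≤ r ∧ g x'' = some (toClassifier g r y₀ x) := by
  have h : ∃ y x', dist x x' ≤ r ∧ g x' = some y := ⟨y, x', hx', hy⟩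
  simpa [toClassifier, hx, h] using h.choose_spec

theorem toClassifier_ne_subset (y₀ : Y) :
    {p : X × Y | toClassifier g r y₀ p.1 ≠ p.2} ⊆ {p | g p.1 ≠ some p.2} :=
  fun _ hp hg => hp (toClassifier_of_eq_some hg)

theorem exists_fooled_of_toClassifier_fooled {ε : ℝ} {x x' : X} {y : Y} (hx : g x = some y)
    (hxx' : dist x x' ≤ ε / 2) (hfooled : toClassifier g (ε / 2) y₀ x' ≠ y) :
    ∃ x'', dist x x'' ≤ ε ∧ g x'' ≠ some y ∧ g x'' ≠ none := by
  cases hx' : g x' with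
  | some y' =>
    have hε : 0 ≤ ε := by linarith [dist_nonneg (x := x) (y := x')]
    rw [toClassifier_of_eq_some hx'] at hfooled
    exact ⟨x', by linarith, by simpa [hx'] using hfooled, by simp [hx']⟩
  | none =>
    obtain ⟨x'', hx'x'', hx''⟩ :=
      exists_near_eq_some_toClassifier (r := ε / 2) (y₀ := y₀) hx' (by rwa [dist_comm]) hx
    refine ⟨x'', ?_, by simpa [hx''] using hfooled, by simp [hx'']⟩
    linarith [dist_triangle x x' x'']

theorem toClassifier_robust_ne_subset (ε : ℝ) (y₀ : Y) :
    {p : X × Y | ∃ x', dist p.1 x' ≤ ε / 2 ∧ toClassifier g (ε / 2) y₀ x' ≠ p.2} ⊆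
      {p | g p.1 ≠ some p.2 ∨ ∃ x', dist p.1 x' ≤ ε ∧ g x' ≠ some p.2 ∧ g x' ≠ none} := by
  rintro ⟨x, y⟩ ⟨x', hxx', hfooled⟩
  by_cases hx : g x = some y
  · exact .inr (exists_fooled_of_toClassifier_fooled hx hxx' hfooled)
  · exact .inl hx

end Detector

open Detector in
theorem hardness_transfer_classifier_to_detector_general
    {X : Type*} [MetricSpace X] [MeasurableSpace X] (C : ℕ) (hC : 0 < C) (ε : ℝ)
    (μ : MeasureTheory.Measure (X × Fin C)) (α β : ENNReal)
    (hcls : ∀ f : X → Fin C, μ {p : X × Fin C | f p.1 ≠ p.2} ≤ α →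
      β ≤ μ {p : X × Fin C | ∃ xhat, dist p.1 xhat ≤ ε / 2 ∧ f xhat ≠ p.2}) :
    ∀ g : X → Option (Fin C), μ {p : X × Fin C | g p.1 ≠ some p.2} ≤ α →
      β ≤ μ {p : X × Fin C | g p.1 ≠ some p.2 ∨
        ∃ xhat, dist p.1 xhat ≤ ε ∧ g xhat ≠ some p.2 ∧ g xhat ≠ none} := by
  intro g hg
  let f := toClassifier g (ε / 2) ⟨0, hC⟩
  have hf : μ {p : X × Fin C | f p.1 ≠ p.2} ≤ α :=
    (measure_mono (toClassifier_ne_subset _)).trans hg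
  exact (hcls f hf).trans (measure_mono (toClassifier_robust_ne_subset ε _))

theorem hardness_transfer_classifier_to_detector
    {X : Type*} [MetricSpace X] [MeasurableSpace X] (C : ℕ) (hC : 0 < C) (ε : ℝ) (hε : 0 ≤ ε)
    (μ : MeasureTheory.Measure (X × Fin C)) (α β : ENNReal)
    (hcls : ∀ f : X → Fin C, μ {p : X × Fin C | f p.1 ≠ p.2} ≤ α →
      β ≤ μ {p : X × Fin C | ∃ xhat, dist p.1 xhat ≤ ε / 2 ∧ f xhat ≠ p.2}) :
    ∀ g : X → Option (Fin C), μ {p : X × Fin C | g p.1 ≠ some p.2} ≤ α →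
      β ≤ μ {p : X × Fin C | g p.1 ≠ some p.2 ∨
        ∃ xhat, dist p.1 xhat ≤ ε ∧ g xhat ≠ some p.2 ∧ g xhat ≠ none} :=
  hardness_transfer_classifier_to_detector_general C hC ε μ α β hcls
end
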